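/- Let (N,g) be a complete Riemannian manifold, y ∈ N, ξ ∈ S_yN, γ the unit-speed geodesic with initial data (y,ξ), s > 0 with d_g(y, γ(s)) = s, and x = γ(s). Then the cut time admits the characterization τ(y,ξ) = inf{ s + r : r > 0 and there exists ε > 0 with B(x, r+ε) ⊂ cl(B(y, s+r)) }. -/

import Mathlib

/-- A unit-speed minimizing geodesic segment on `[a,b]`, in metric terms. -/
def IsMinGeodOn {N : Type*} [MetricSpace N] (γ : ℝ → N) (a b : ℝ) : Prop :=
  ∀ s ∈ Set.Icc a b, ∀ t ∈ Set.Icc a b, dist (γ s) (γ t) = |s - t|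

/-- A (complete, unit-speed) geodesic: a curve that is locally distance minimizing. -/
def IsGeodesic {N : Type*} [MetricSpace N] (γ : ℝ → N) : Prop :=
  ∀ t : ℝ, ∃ ε > 0, IsMinGeodOn γ (t - ε) (t + ε)

/-- The cut time `τ(y,ξ) = sup {t > 0 : dist(γ 0, γ t) = t}` of a unit-speed geodesic,
valued in `ℝ≥0∞` (so `sInf ∅ = +∞` below realises the convention `inf ∅ = +∞`). -/
noncomputable def cutTime {N : Type*} [MetricSpace N] (γ : ℝ → N) : ENNReal :=
  sSup (ENNReal.ofReal '' {t : ℝ | 0 < t ∧ dist (γ 0) (γ t) = t})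

/-!
If `B(γ s, r + ε) ⊆ cl B(γ 0, s + r)`, the points `γ t` with `s + r < t < s + r + ε` lie in
that ball, so `d(γ 0, γ t) ≤ s + r < t` and `γ` stops minimizing at `s + r`. Conversely, if no
such `ε` exists, compactness of closed balls yields `z` with `d(γ s, z) = r` and
`d(γ 0, z) = s + r`. Following `γ` up to `γ s` and then a minimizing segment to `z` gives a
minimizing, hence locally minimizing, curve that agrees with `γ` on `[0, s]`; by rigidity it
is `γ`, so `γ` minimizes up to `s + r`.
-/

open Set Metric Filter Topology

section Geodesic

variable {N : Type*} [MetricSpace N]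

theorem IsMinGeodOn.mono {γ : ℝ → N} {a b a' b' : ℝ} (h : IsMinGeodOn γ a b)
    (ha : a ≤ a') (hb : b' ≤ b) : IsMinGeodOn γ a' b' :=
  fun u hu t ht => h u ⟨ha.trans hu.1, hu.2.trans hb⟩ t ⟨ha.trans ht.1, ht.2.trans hb⟩

theorem IsMinGeodOn.congr {γ₁ γ₂ : ℝ → N} {a b : ℝ} (h : IsMinGeodOn γ₁ a b)
    (he : EqOn γ₁ γ₂ (Icc a b)) : IsMinGeodOn γ₂ a b := by
  intro u hu t ht
  rw [← he hu, ← he ht]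
  exact h u hu t ht

theorem IsMinGeodOn.comp_sub {σ : ℝ → N} {a b : ℝ} (h : IsMinGeodOn σ a b) (s : ℝ) :
    IsMinGeodOn (fun t => σ (t - s)) (a + s) (b + s) := by
  intro u hu t ht
  simpa using h (u - s) ⟨by linarith [hu.1], by linarith [hu.2]⟩
    (t - s) ⟨by linarith [ht.1], by linarith [ht.2]⟩

theorem IsMinGeodOn.lipschitzOnWith {γ : ℝ → N} {a b : ℝ} (h : IsMinGeodOn γ a b) :
    LipschitzOnWith 1 γ (Icc a b) :=
  LipschitzOnWith.mk_one fun u hu t ht => (h u hu t ht).trans_le (Real.dist_eq u t).ge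

theorem isMinGeodOn_of_forall_le {γ : ℝ → N} {a b : ℝ}
    (h : ∀ u ∈ Icc a b, ∀ t ∈ Icc a b, u ≤ t → dist (γ u) (γ t) = t - u) :
    IsMinGeodOn γ a b := by
  intro u hu t ht
  rcases le_total u t with hut | htu
  · rw [h u hu t ht hut, abs_of_nonpos (sub_nonpos.2 hut), neg_sub]
  · rw [dist_comm, h t ht u hu htu, abs_of_nonneg (sub_nonneg.2 htu)]

theorem IsMinGeodOn.of_dist_le {γ : ℝ → N} {a b : ℝ}
    (hlip : ∀ u ∈ Icc a b, ∀ t ∈ Icc a b, u ≤ t → dist (γ u) (γ t) ≤ t - u)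
    (h : dist (γ a) (γ b) = b - a) : IsMinGeodOn γ a b := by
  refine isMinGeodOn_of_forall_le fun u hu t ht hut => (hlip u hu t ht hut).antisymm ?_
  have hab : a ≤ b := hu.1.trans hu.2
  have := dist_triangle4 (γ a) (γ u) (γ t) (γ b)
  linarith [hlip a ⟨le_rfl, hab⟩ u hu hu.1, hlip t ht b ⟨ht.1.trans ht.2, le_rfl⟩ ht.2]

theorem IsMinGeodOn.trans {γ : ℝ → N} {a s b : ℝ} (h₁ : IsMinGeodOn γ a s)
    (h₂ : IsMinGeodOn γ s b) (h : dist (γ a) (γ b) = b - a) : IsMinGeodOn γ a b := by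
  refine IsMinGeodOn.of_dist_le (fun u hu t ht hut => ?_) h
  rcases le_total t s with hts | hst
  · rw [h₁ u ⟨hu.1, hut.trans hts⟩ t ⟨ht.1, hts⟩, abs_of_nonpos (by linarith), neg_sub]
  rcases le_total u s with hus | hsu
  · have h₁' := h₁ u ⟨hu.1, hus⟩ s ⟨hu.1.trans hus, le_rfl⟩
    have h₂' := h₂ s ⟨le_rfl, hst.trans ht.2⟩ t ⟨hst, ht.2⟩
    rw [abs_of_nonpos (by linarith)] at h₁' h₂'
    linarith [dist_triangle (γ u) (γ s) (γ t)]
  · rw [h₂ u ⟨hsu, hu.2⟩ t ⟨hst, ht.2⟩, abs_of_nonpos (by linarith), neg_sub]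

theorem IsGeodesic.comp_sub {σ : ℝ → N} (hσ : IsGeodesic σ) (s : ℝ) :
    IsGeodesic (fun t => σ (t - s)) := by
  intro t
  obtain ⟨ε, hε, hm⟩ := hσ (t - s)
  exact ⟨ε, hε, by convert hm.comp_sub s using 1 <;> ring⟩

theorem IsGeodesic.locallyLipschitz {γ : ℝ → N} (hγ : IsGeodesic γ) : LocallyLipschitz γ := by
  intro t
  obtain ⟨ε, hε, hm⟩ := hγ t
  exact ⟨1, Icc (t - ε) (t + ε), Icc_mem_nhds (by linarith) (by linarith), hm.lipschitzOnWith⟩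

theorem IsGeodesic.dist_le {γ : ℝ → N} (hγ : IsGeodesic γ) {a b : ℝ} (hab : a ≤ b) :
    dist (γ a) (γ b) ≤ b - a := by
  let S : Set ℝ := {t | dist (γ a) (γ t) ≤ t - a}
  have hS : IsClosed S :=
    isClosed_le (continuous_const.dist hγ.locallyLipschitz.continuous) (by fun_prop)
  refine hS.inter isClosed_Icc |>.Icc_subset_of_forall_mem_nhdsWithin (by simp [S])
    (fun x ⟨hxS, _⟩ => ?_) ⟨hab, le_rfl⟩
  obtain ⟨ε, hε, hm⟩ := hγ x
  filter_upwards [Icc_mem_nhdsGT (show x < x + ε by linarith)] with u hu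
  have hxu := hm x ⟨by linarith, by linarith⟩ u ⟨by linarith [hu.1], hu.2⟩
  rw [abs_of_nonpos (by linarith [hu.1])] at hxu
  have : dist (γ a) (γ x) ≤ x - a := hxS
  show dist (γ a) (γ u) ≤ u - a
  linarith [dist_triangle (γ a) (γ x) (γ u)]

theorem IsGeodesic.isMinGeodOn_of_dist_eq {γ : ℝ → N} (hγ : IsGeodesic γ) {a b : ℝ}
    (h : dist (γ a) (γ b) = b - a) : IsMinGeodOn γ a b :=
  IsMinGeodOn.of_dist_le (fun _ _ _ _ hut => hγ.dist_le hut) h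

theorem exists_isMinGeodOn_of_eventuallyEq {γ c : ℝ → N} {t : ℝ} (hγ : IsGeodesic γ)
    (h : c =ᶠ[𝓝 t] γ) : ∃ ε > 0, IsMinGeodOn c (t - ε) (t + ε) := by
  obtain ⟨ε, hε, hm⟩ := hγ t
  obtain ⟨δ, hδ, hδc⟩ := Metric.eventually_nhds_iff.1 h
  refine ⟨min ε (δ / 2), by positivity, ?_⟩
  refine (hm.mono (by linarith [min_le_left ε (δ / 2)])
    (by linarith [min_le_left ε (δ / 2)])).congr fun u hu => (hδc ?_).symm
  rw [Real.dist_eq, abs_lt]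
  constructor <;> linarith [hu.1, hu.2, min_le_right ε (δ / 2)]

end Geodesic

section Concat

variable {N : Type*}

noncomputable def geodConcat (γ σ : ℝ → N) (s : ℝ) : ℝ → N :=
  fun t => if t ≤ s then γ t else σ (t - s)

theorem geodConcat_of_le {γ σ : ℝ → N} {s t : ℝ} (h : t ≤ s) : geodConcat γ σ s t = γ t :=
  if_pos h

theorem geodConcat_of_ge {γ σ : ℝ → N} {s t : ℝ} (hσ : σ 0 = γ s) (h : s ≤ t) :
    geodConcat γ σ s t = σ (t - s) := by
  rcases h.eq_or_lt with rfl | h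
  · rw [geodConcat_of_le le_rfl, sub_self, hσ]
  · exact if_neg (not_le.2 h)

variable [MetricSpace N]

theorem isGeodesic_geodConcat {γ σ : ℝ → N} {s : ℝ} (hγ : IsGeodesic γ) (hσ : IsGeodesic σ)
    (hs : ∃ ε > 0, IsMinGeodOn (geodConcat γ σ s) (s - ε) (s + ε)) :
    IsGeodesic (geodConcat γ σ s) := by
  intro t
  rcases lt_trichotomy t s with hts | rfl | hst
  · exact exists_isMinGeodOn_of_eventuallyEq hγ <|
      (eventually_lt_nhds hts).mono fun u hu => geodConcat_of_le (le_of_lt hu)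
  · exact hs
  · exact exists_isMinGeodOn_of_eventuallyEq (hσ.comp_sub s) <|
      (eventually_gt_nhds hst).mono fun u hu => if_neg (not_le.2 hu)

theorem isMinGeodOn_geodConcat {γ σ : ℝ → N} {a s r : ℝ} (hγ : IsMinGeodOn γ a s)
    (hσ : IsMinGeodOn σ 0 r) (hσ0 : σ 0 = γ s) (ha : a ≤ s) (hr : 0 ≤ r)
    (h : dist (γ a) (σ r) = s + r - a) : IsMinGeodOn (geodConcat γ σ s) a (s + r) := by
  have hσ' : IsMinGeodOn (fun t => σ (t - s)) s (s + r) := by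
    convert hσ.comp_sub s using 1 <;> ring
  refine (hγ.congr fun u hu => (geodConcat_of_le hu.2).symm).trans
    (hσ'.congr fun u hu => (geodConcat_of_ge hσ0 hu.1).symm) ?_
  rwa [geodConcat_of_le ha, geodConcat_of_ge hσ0 (by linarith), add_sub_cancel_left]

end Concat

section CutTime

variable {N : Type*} [MetricSpace N]

theorem ofReal_le_cutTime {γ : ℝ → N} {t : ℝ} (ht : 0 < t) (h : dist (γ 0) (γ t) = t) :
    ENNReal.ofReal t ≤ cutTime γ :=
  le_sSup ⟨t, ⟨ht, h⟩, rfl⟩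

theorem exists_dist_le_le_dist_of_forall_not_ball_subset [ProperSpace N] {x y : N} {r R : ℝ}
    (h : ∀ ε > 0, ¬ ball x (r + ε) ⊆ ball y R) : ∃ z, dist x z ≤ r ∧ R ≤ dist y z := by
  let F : Set N := {w | R ≤ dist y w}
  have hF : ∀ ε > 0, ∃ w ∈ F, dist x w < r + ε := by
    intro ε hε
    obtain ⟨w, hwx, hwy⟩ := not_subset.1 (h ε hε)
    exact ⟨w, by simpa [F, dist_comm] using hwy, by simpa [dist_comm] using hwx⟩
  obtain ⟨w, hwF, -⟩ := hF 1 one_pos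
  obtain ⟨z, hzF, hz⟩ := (isClosed_le continuous_const (continuous_const.dist continuous_id)
    : IsClosed F).exists_infDist_eq_dist ⟨w, hwF⟩ x
  refine ⟨z, hz ▸ le_of_forall_pos_lt_add fun ε hε => ?_, hzF⟩
  obtain ⟨w, hwF, hw⟩ := hF ε hε
  exact (infDist_le_dist_of_mem hwF).trans_lt hw

theorem IsGeodesic.le_of_ball_subset_closure_ball {γ : ℝ → N} (hγ : IsGeodesic γ)
    {s r t ε : ℝ} (hs : 0 ≤ s) (hr : 0 ≤ r) (hε : 0 < ε) (ht : dist (γ 0) (γ t) = t)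
    (hball : ball (γ s) (r + ε) ⊆ closure (ball (γ 0) (s + r))) : t ≤ s + r := by
  by_contra! hlt
  set t' := min t (s + r + ε / 2)
  have ht' : s + r < t' := lt_min hlt (by linarith)
  have hmin : IsMinGeodOn γ 0 t := hγ.isMinGeodOn_of_dist_eq (by rw [ht, sub_zero])
  have hdist : dist (γ 0) (γ t') = t' := by
    rw [hmin 0 ⟨le_rfl, by linarith⟩ t' ⟨by linarith, min_le_left _ _⟩, zero_sub, abs_neg,
      abs_of_nonneg (by linarith)]
  have hmem : γ t' ∈ ball (γ s) (r + ε) := by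
    rw [mem_ball, dist_comm]
    linarith [hγ.dist_le (show s ≤ t' by linarith), min_le_right t (s + r + ε / 2)]
  have := closure_ball_subset_closedBall (hball hmem)
  rw [mem_closedBall, dist_comm, hdist] at this
  linarith

theorem dist_eq_of_forall_not_ball_subset [ProperSpace N]
    (hconn : ∀ x y : N, ∃ γ : ℝ → N, IsGeodesic γ ∧ γ 0 = x ∧ γ (dist x y) = y ∧
      IsMinGeodOn γ 0 (dist x y))
    (hrig : ∀ γ₁ γ₂ : ℝ → N, IsGeodesic γ₁ → IsGeodesic γ₂ →
      ∀ a b : ℝ, a < b → (∀ t ∈ Set.Icc a b, γ₁ t = γ₂ t) → γ₁ = γ₂)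
    {γ : ℝ → N} (hγ : IsGeodesic γ) {s r : ℝ} (hs : 0 < s) (hr : 0 < r)
    (hmin : dist (γ 0) (γ s) = s) (hball : ∀ ε > 0, ¬ ball (γ s) (r + ε) ⊆ ball (γ 0) (s + r)) :
    dist (γ 0) (γ (s + r)) = s + r := by
  obtain ⟨z, hsz, hz⟩ := exists_dist_le_le_dist_of_forall_not_ball_subset hball
  have htri := dist_triangle (γ 0) (γ s) z
  replace hz : dist (γ 0) z = s + r := by linarith
  replace hsz : dist (γ s) z = r := by linarith
  obtain ⟨σ, hσ, hσ0, hσr, hσmin⟩ := hconn (γ s) z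
  rw [hsz] at hσr hσmin
  have hcmin : IsMinGeodOn (geodConcat γ σ s) 0 (s + r) :=
    isMinGeodOn_geodConcat (hγ.isMinGeodOn_of_dist_eq (by rw [hmin, sub_zero])) hσmin hσ0
      hs.le hr.le (by rw [hσr, hz, sub_zero])
  have hc : IsGeodesic (geodConcat γ σ s) := isGeodesic_geodConcat hγ hσ
    ⟨min s r, lt_min hs hr, hcmin.mono (by linarith [min_le_left s r])
      (by linarith [min_le_right s r])⟩
  have hγc : γ = geodConcat γ σ s :=
    hrig γ _ hγ hc 0 s hs fun t ht => (geodConcat_of_le ht.2).symm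
  have hγz : γ (s + r) = z := by
    rw [hγc, geodConcat_of_ge hσ0 (by linarith), add_sub_cancel_left, hσr]
  rw [hγz, hz]

end CutTime

/-- Let `(N,g)` be a complete Riemannian manifold (proper metric space
with minimizing geodesics and geodesic rigidity), `γ` the unit-speed geodesic with
`γ 0 = y`, `s > 0` with `dist (y, γ s) = s` and `x = γ s`.  Then the cut time admits the
characterization
`τ(y,ξ) = inf { s + r : r > 0 and ∃ ε > 0, B(x, r+ε) ⊆ cl(B(y, s+r)) }`. -/
theorem cutTime_eq_inf
    {N : Type*} [MetricSpace N] [ProperSpace N]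
    (hconn : ∀ x y : N, ∃ γ : ℝ → N, IsGeodesic γ ∧ γ 0 = x ∧ γ (dist x y) = y ∧
      IsMinGeodOn γ 0 (dist x y))
    (hrig : ∀ γ₁ γ₂ : ℝ → N, IsGeodesic γ₁ → IsGeodesic γ₂ →
      ∀ a b : ℝ, a < b → (∀ t ∈ Set.Icc a b, γ₁ t = γ₂ t) → γ₁ = γ₂)
    (γ : ℝ → N) (hγ : IsGeodesic γ) (y : N) (hy : γ 0 = y)
    (s : ℝ) (hs : 0 < s) (hmin : dist y (γ s) = s) :
    cutTime γ = sInf {c : ENNReal | ∃ r : ℝ, 0 < r ∧ c = ENNReal.ofReal (s + r) ∧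
      ∃ ε : ℝ, 0 < ε ∧ Metric.ball (γ s) (r + ε) ⊆ closure (Metric.ball y (s + r))} := by
  subst hy
  refine le_antisymm (le_sInf ?_) (le_of_forall_gt fun c hc => ?_)
  · rintro _ ⟨r, hr, rfl, ε, hε, hball⟩
    refine sSup_le ?_
    rintro _ ⟨t, ⟨-, ht⟩, rfl⟩
    exact ENNReal.ofReal_le_ofReal (hγ.le_of_ball_subset_closure_ball hs.le hr.le hε ht hball)
  obtain ⟨t, -, htτ, htc⟩ := ENNReal.lt_iff_exists_real_btwn.1 hc
  have hst : s < t := (ENNReal.ofReal_lt_ofReal_iff'.1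
    ((ofReal_le_cutTime hs hmin).trans_lt htτ)).1
  have hball : ∃ ε : ℝ, 0 < ε ∧ ball (γ s) (t - s + ε) ⊆ closure (ball (γ 0) (s + (t - s))) := by
    by_contra! hnot
    have hdist := dist_eq_of_forall_not_ball_subset hconn hrig hγ hs (sub_pos.2 hst) hmin
      fun ε hε hsub => (hnot ε hε) (hsub.trans subset_closure)
    rw [add_sub_cancel] at hdist
    exact htτ.not_ge (ofReal_le_cutTime (hs.trans hst) hdist)
  refine (sInf_le ?_).trans_lt htc
  exact ⟨t - s, sub_pos.2 hst, by rw [add_sub_cancel], hball⟩
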